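/- Let A be nonnegative with zero diagonal, B, D positive diagonal, and suppose μ(AᵀB − D) < 0 (equivalently ρ(D^{-1}AᵀB) < 1). Then along the SIS dynamics ṗ = (AᵀB − D)p − diag(p)AᵀB p with p(0) ∈ [0,1]ⁿ, there exists a positive diagonal matrix R₁ and a positive definite K such that the Lyapunov function V(p) = pᵀR₁p satisfies V̇(p) ≤ −pᵀKp along trajectories in [0,1]ⁿ; hence the origin (disease-free state) is globally asymptotically stable on [0,1]ⁿ. -/

import Mathlib

/-!
Since `N = AᵀB - D` is Metzler and Hurwitz, `P = 1 + εN` is, for small `ε > 0`, a nonnegative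
matrix whose spectrum lies in the open unit disc, so `Pᵐ → 0` by Gelfand's formula. The solution
of `Nv = -𝟙` satisfies `v = ε𝟙 + Pv`, which forces `v ≥ ε𝟙`; hence there are positive vectors
`v`, `w` with `Nv < 0` and `Nᵀw < 0`. For `R = diag(w / v)` the symmetric Metzler matrix
`Q = NᵀR + RN` has `Qv = Nᵀw + R(Nv) < 0`, and the positive vector `v` lets one compare the
quadratic form of `Q` with the diagonal one: `xᵀQx ≤ -∑ dᵢ xᵢ²`, `dᵢ = -(Qv)ᵢ / vᵢ > 0`.

Along the SIS flow `2 pᵀRṗ = pᵀQp - 2 pᵀR diag(p) AᵀB p`, and the last term is nonnegative as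
soon as `p ≥ 0`. The orthant `p ≥ 0` is forward invariant (on a face `pᵢ = 0` the field is
`(AᵀB p)ᵢ ≥ 0`), so `V(p) = pᵀRp` decays exponentially and `p(t) → 0`.
-/

open Matrix Set Filter

noncomputable def matSpec {n : ℕ} (X : Matrix (Fin n) (Fin n) ℝ) : Set ℂ :=
  spectrum ℂ (X.map (Complex.ofReal))

def IsMetzler {n : ℕ} (X : Matrix (Fin n) (Fin n) ℝ) : Prop :=
  ∀ i j, i ≠ j → 0 ≤ X i j

def IsHurwitz {n : ℕ} (X : Matrix (Fin n) (Fin n) ℝ) : Prop :=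
  ∀ z ∈ matSpec X, z.re < 0

def MatIrreducible {n : ℕ} (X : Matrix (Fin n) (Fin n) ℝ) : Prop :=
  ∀ S : Finset (Fin n), S.Nonempty → S ≠ Finset.univ → ∃ i ∈ S, ∃ j ∉ S, X i j ≠ 0

noncomputable def spectralAbscissa {n : ℕ} (X : Matrix (Fin n) (Fin n) ℝ) : ℝ :=
  sSup (Complex.re '' matSpec X)

noncomputable def spectralRadiusR {n : ℕ} (X : Matrix (Fin n) (Fin n) ℝ) : ℝ :=
  sSup ((fun z => ‖z‖) '' matSpec X)

open Topology
open scoped NNReal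

theorem tendsto_pow_nhds_zero_of_spectralRadius_lt_one {A : Type*} [NormedRing A]
    [NormedAlgebra ℂ A] [CompleteSpace A] {a : A} (h : spectralRadius ℂ a < 1) :
    Tendsto (a ^ ·) atTop (𝓝 0) := by
  obtain ⟨t, hat, ht1⟩ := exists_between h
  lift t to ℝ≥0 using ht1.ne_top
  have hdecay : ∀ᶠ m : ℕ in atTop, ‖a ^ m‖ ≤ t ^ m := by
    have hgelfand := spectrum.pow_nnnorm_pow_one_div_tendsto_nhds_spectralRadius a
    filter_upwards [hgelfand.eventually_lt_const hat, eventually_ge_atTop 1] with m hm hm1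
    rw [one_div, ENNReal.rpow_inv_lt_iff (by positivity), ENNReal.rpow_natCast, ← ENNReal.coe_pow,
      ENNReal.coe_lt_coe] at hm
    exact_mod_cast hm.le
  exact squeeze_zero_norm' hdecay
    (tendsto_pow_atTop_nhds_zero_of_lt_one t.coe_nonneg (mod_cast ht1))

theorem spectrum_transpose {ι R : Type*} [Fintype ι] [DecidableEq ι] [CommRing R]
    (M : Matrix ι ι R) : spectrum R Mᵀ = spectrum R M := by
  ext z
  rw [spectrum.mem_iff, spectrum.mem_iff, ← isUnit_transpose, transpose_sub,
    algebraMap_eq_diagonal, diagonal_transpose, transpose_transpose]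

theorem mulVec_nonneg {ι : Type*} [Fintype ι] {M : Matrix ι ι ℝ} (hM : ∀ i j, 0 ≤ M i j)
    {v : ι → ℝ} (hv : 0 ≤ v) : 0 ≤ M *ᵥ v :=
  fun i => dotProduct_nonneg_of_nonneg (fun j => hM i j) hv

theorem le_of_eq_add_mulVec_of_tendsto_pow {ι : Type*} [Fintype ι] [DecidableEq ι]
    {P : Matrix ι ι ℝ} (hP : ∀ i j, 0 ≤ P i j) (hlim : Tendsto (P ^ ·) atTop (𝓝 0))
    {b v : ι → ℝ} (hb : 0 ≤ b) (hv : v = b + P *ᵥ v) : b ≤ v := by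
  set u : ℕ → ι → ℝ := fun m => v - P ^ m *ᵥ v
  have hu : ∀ m, u (m + 1) = b + P *ᵥ u m := fun m => by
    simp only [u, mulVec_sub, mulVec_mulVec, ← pow_succ']
    nth_rw 1 [hv]; abel
  have hu0 : ∀ m, 0 ≤ u m := fun m => by
    induction m with
    | zero => simp [u]
    | succ m ih => rw [hu]; exact add_nonneg hb (mulVec_nonneg hP ih)
  have hlim' : Tendsto (fun m => u (m + 1)) atTop (𝓝 v) := by
    have := ((continuous_id.matrix_mulVec (continuous_const (y := v))).tendsto 0).comp
      (hlim.comp (tendsto_add_atTop_nat 1))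
    simpa [u] using tendsto_const_nhds.sub this
  exact ge_of_tendsto' hlim' fun m => by
    rw [hu]; exact le_add_of_nonneg_right (mulVec_nonneg hP (hu0 m))

theorem matSpec_transpose {n : ℕ} (N : Matrix (Fin n) (Fin n) ℝ) : matSpec Nᵀ = matSpec N := by
  rw [matSpec, matSpec, transpose_map, spectrum_transpose]

theorem matSpec_one_add_smul {n : ℕ} [NeZero n] (N : Matrix (Fin n) (Fin n) ℝ) (ε : ℝ) :
    matSpec (1 + ε • N) = (fun z : ℂ => 1 + ε * z) '' matSpec N := by
  have : (1 + ε • N).map Complex.ofReal =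
      Polynomial.aeval (N.map Complex.ofReal) (1 + Polynomial.C (ε : ℂ) * Polynomial.X) := by
    ext i j
    by_cases h : i = j <;> simp [Algebra.algebraMap_eq_smul_one, one_apply, h]
  unfold matSpec
  rw [this, spectrum.map_polynomial_aeval_of_nonempty _ _
    (spectrum.nonempty_of_isAlgClosed_of_finiteDimensional ℂ _)]
  simp

theorem tendsto_pow_nhds_zero_of_matSpec {n : ℕ} [NeZero n] {P : Matrix (Fin n) (Fin n) ℝ}
    (h : ∀ z ∈ matSpec P, ‖z‖ < 1) : Tendsto (P ^ ·) atTop (𝓝 0) := by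
  -- any submultiplicative norm on complex matrices serves Gelfand's formula
  let _ := Matrix.linftyOpNormedRing (n := Fin n) (α := ℂ)
  let _ := Matrix.linftyOpNormedAlgebra (n := Fin n) (R := ℂ) (α := ℂ)
  set PC := P.map Complex.ofReal
  have hrad : spectralRadius ℂ PC < 1 := by
    have := spectrum.spectralRadius_lt_of_forall_lt_of_nonempty (𝕜 := ℂ)
      (spectrum.nonempty_of_isAlgClosed_of_finiteDimensional ℂ PC) (r := 1) (fun z hz => by
        simpa [← NNReal.coe_lt_coe] using h z hz)
    simpa using this
  have hre : ∀ m, P ^ m = (PC ^ m).map Complex.re := fun m => by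
    rw [show PC = P.map Complex.ofRealHom from rfl, ← Matrix.map_pow, Matrix.map_map]
    ext; simp
  simpa [hre, Function.comp_def] using
    ((continuous_id.matrix_map Complex.continuous_re).tendsto 0).comp
      (tendsto_pow_nhds_zero_of_spectralRadius_lt_one hrad)

theorem eventually_norm_one_add_mul_lt_one {z : ℂ} (hz : z.re < 0) :
    ∀ᶠ ε : ℝ in 𝓝[>] 0, ‖1 + ε * z‖ < 1 := by
  have hlim : Tendsto (fun ε : ℝ => 2 * z.re + ε * ‖z‖ ^ 2) (𝓝[>] 0) (𝓝 (2 * z.re)) := by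
    refine tendsto_nhdsWithin_of_tendsto_nhds ?_
    simpa using ((continuous_id.mul continuous_const).const_add (2 * z.re)).tendsto (0 : ℝ)
  filter_upwards [hlim.eventually_lt_const (show 2 * z.re < 0 by linarith), self_mem_nhdsWithin]
    with ε hneg (hε : 0 < ε)
  have hsq : ‖1 + ε * z‖ ^ 2 = 1 + ε * (2 * z.re + ε * ‖z‖ ^ 2) := by
    rw [Complex.sq_norm, Complex.sq_norm, Complex.normSq_apply, Complex.normSq_apply]
    simp only [Complex.add_re, Complex.one_re, Complex.mul_re, Complex.ofReal_re,
      Complex.ofReal_im, zero_mul, sub_zero, Complex.add_im, Complex.one_im, Complex.mul_im,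
      add_zero, zero_add]
    ring
  have : ‖1 + ε * z‖ ^ 2 < 1 ^ 2 := by
    rw [hsq]; nlinarith [mul_neg_of_pos_of_neg hε hneg]
  exact (pow_lt_pow_iff_left₀ (norm_nonneg _) zero_le_one two_ne_zero).1 this

theorem IsMetzler.eventually_nonneg_one_add_smul {n : ℕ} {N : Matrix (Fin n) (Fin n) ℝ}
    (hN : IsMetzler N) : ∀ᶠ ε : ℝ in 𝓝[>] 0, ∀ i j, 0 ≤ (1 + ε • N) i j := by
  refine eventually_all.2 fun i => eventually_all.2 fun j => ?_
  rcases eq_or_ne i j with rfl | hij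
  · have hlim : Tendsto (fun ε : ℝ => 1 + ε * N i i) (𝓝[>] 0) (𝓝 1) := by
      refine tendsto_nhdsWithin_of_tendsto_nhds ?_
      simpa using ((continuous_id.mul continuous_const).const_add 1).tendsto (0 : ℝ)
    filter_upwards [hlim.eventually_const_lt zero_lt_one] with ε hε
    simpa using hε.le
  · filter_upwards [self_mem_nhdsWithin] with ε (hε : 0 < ε)
    simpa [hij] using mul_nonneg hε.le (hN i j hij)

theorem IsMetzler.exists_pos_mulVec_neg {n : ℕ} {N : Matrix (Fin n) (Fin n) ℝ}
    (hN : IsMetzler N) (hH : IsHurwitz N) :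
    ∃ v : Fin n → ℝ, (∀ i, 0 < v i) ∧ ∀ i, (N *ᵥ v) i < 0 := by
  rcases Nat.eq_zero_or_pos n with rfl | hn
  · exact ⟨0, finZeroElim, finZeroElim⟩
  have : NeZero n := ⟨hn.ne'⟩
  have hspec : ∀ᶠ ε : ℝ in 𝓝[>] 0, ∀ z ∈ matSpec N, ‖1 + ε * z‖ < 1 :=
    (Matrix.finite_spectrum _).eventually_all.2 fun z hz =>
      eventually_norm_one_add_mul_lt_one (hH z hz)
  obtain ⟨ε, ⟨hP, hPspec⟩, hε : 0 < ε⟩ :=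
    ((hN.eventually_nonneg_one_add_smul.and hspec).and self_mem_nhdsWithin).exists
  set P := 1 + ε • N
  have hPpow : Tendsto (P ^ ·) atTop (𝓝 0) := by
    refine tendsto_pow_nhds_zero_of_matSpec ?_
    rw [matSpec_one_add_smul]
    rintro _ ⟨z, hz, rfl⟩
    exact hPspec z hz
  have hPv : ∀ x, P *ᵥ x = x + ε • N *ᵥ x := fun x => by
    simp [P, add_mulVec, smul_mulVec]
  have hker : ∀ x, N *ᵥ x = 0 → x = 0 := fun x hx => by
    have hfix : ∀ m, P ^ m *ᵥ x = x := fun m => by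
      induction m with
      | zero => simp
      | succ m ih => rw [pow_succ, ← mulVec_mulVec, hPv, hx, smul_zero, add_zero, ih]
    have := ((continuous_id.matrix_mulVec (continuous_const (y := x))).tendsto 0).comp hPpow
    simp only [Function.comp_def, id, hfix, zero_mulVec] at this
    exact tendsto_nhds_unique tendsto_const_nhds this
  have hunit : IsUnit N := by
    rw [isUnit_iff_isUnit_det, isUnit_iff_ne_zero, Ne, ← exists_mulVec_eq_zero_iff]
    rintro ⟨x, hx0, hx⟩
    exact hx0 (hker x hx)
  obtain ⟨v, hv⟩ := mulVec_surjective_iff_isUnit.2 hunit (fun _ => -1)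
  have hεv : (fun _ => ε) ≤ v := by
    refine le_of_eq_add_mulVec_of_tendsto_pow hP hPpow (fun _ => hε.le) ?_
    ext i; simp [hPv, hv]
  exact ⟨v, fun i => hε.trans_le (hεv i), fun i => by simp [hv]⟩

theorem IsMetzler.dotProduct_mulVec_le {n : ℕ} {Q : Matrix (Fin n) (Fin n) ℝ} (hQ : IsMetzler Q)
    (hsymm : Q.IsSymm) {v : Fin n → ℝ} (hv : ∀ i, 0 < v i) (x : Fin n → ℝ) :
    x ⬝ᵥ (Q *ᵥ x) ≤ x ⬝ᵥ (diagonal (fun i => (Q *ᵥ v) i / v i) *ᵥ x) := by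
  -- the gap is `½ ∑ᵢⱼ Qᵢⱼ vᵢ vⱼ (xᵢ / vᵢ - xⱼ / vⱼ)²`, whose nonzero terms are off-diagonal
  set H : Fin n → Fin n → ℝ := fun i j => Q i j * (v j / v i * x i ^ 2 - x i * x j)
  have hdiff : x ⬝ᵥ (diagonal (fun i => (Q *ᵥ v) i / v i) *ᵥ x) - x ⬝ᵥ (Q *ᵥ x) =
      ∑ i, ∑ j, H i j := by
    simp only [dotProduct, mulVec_diagonal]
    simp only [mulVec, dotProduct, ← Finset.sum_sub_distrib, H, Finset.mul_sum, Finset.sum_div,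
      Finset.sum_mul]
    refine Finset.sum_congr rfl fun i _ => Finset.sum_congr rfl fun j _ => ?_
    field_simp [(hv i).ne']
  have hpair : ∀ i j, 0 ≤ H i j + H j i := fun i j => by
    rcases eq_or_ne i j with rfl | hij
    · simp [H, div_self (hv i).ne', sq]
    have hvi := hv i; have hvj := hv j
    have : H i j + H j i = Q i j * (v i * v j) * (x i / v i - x j / v j) ^ 2 := by
      simp only [H, hsymm.apply i j]
      field_simp
      ring
    rw [this]
    exact mul_nonneg (mul_nonneg (hQ i j hij) (by positivity)) (sq_nonneg _)
  have hswap : ∑ i, ∑ j, H j i = ∑ i, ∑ j, H i j := Finset.sum_comm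
  have : 0 ≤ ∑ i, ∑ j, (H i j + H j i) :=
    Finset.sum_nonneg fun i _ => Finset.sum_nonneg fun j _ => hpair i j
  simp only [Finset.sum_add_distrib, hswap] at this
  linarith

theorem IsMetzler.exists_diagonal_lyapunov {n : ℕ} {N : Matrix (Fin n) (Fin n) ℝ}
    (hN : IsMetzler N) (hH : IsHurwitz N) :
    ∃ r d : Fin n → ℝ, (∀ i, 0 < r i) ∧ (∀ i, 0 < d i) ∧
      ∀ x, 2 * (x ⬝ᵥ (diagonal r *ᵥ (N *ᵥ x))) ≤ -(x ⬝ᵥ (diagonal d *ᵥ x)) := by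
  obtain ⟨v, hv, hNv⟩ := hN.exists_pos_mulVec_neg hH
  obtain ⟨w, hw, hNw⟩ := IsMetzler.exists_pos_mulVec_neg (N := Nᵀ)
    (fun i j hij => hN j i hij.symm) (by rwa [IsHurwitz, matSpec_transpose])
  set r : Fin n → ℝ := fun i => w i / v i
  have hr : ∀ i, 0 < r i := fun i => div_pos (hw i) (hv i)
  set S := diagonal r * N
  set Q := Sᵀ + S with hQ_def
  have hQ : IsMetzler Q := fun i j hij => by
    simp only [Q, S, Matrix.add_apply, transpose_apply, diagonal_mul]
    exact add_nonneg (mul_nonneg (hr j).le (hN j i hij.symm)) (mul_nonneg (hr i).le (hN i j hij))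
  have hQv : ∀ i, (Q *ᵥ v) i = (Nᵀ *ᵥ w) i + r i * (N *ᵥ v) i := fun i => by
    have hrv : diagonal r *ᵥ v = w := funext fun i => by
      simp [mulVec_diagonal, r, div_mul_cancel₀ _ (hv i).ne']
    simp [Q, S, add_mulVec, ← mulVec_mulVec, transpose_mul, hrv, mulVec_diagonal]
  refine ⟨r, fun i => -(Q *ᵥ v) i / v i, hr, fun i => ?_, fun x => ?_⟩
  · show 0 < -(Q *ᵥ v) i / v i
    rw [hQv]
    exact div_pos (by nlinarith [hNw i, hNv i, hr i]) (hv i)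
  calc 2 * (x ⬝ᵥ (diagonal r *ᵥ (N *ᵥ x))) = x ⬝ᵥ (Q *ᵥ x) := by
        have hSS : x ⬝ᵥ (Sᵀ *ᵥ x) = x ⬝ᵥ (S *ᵥ x) := by
          rw [dotProduct_mulVec, vecMul_transpose, dotProduct_comm]
        rw [hQ_def, add_mulVec, dotProduct_add, hSS, mulVec_mulVec]
        ring
    _ ≤ x ⬝ᵥ (diagonal (fun i => (Q *ᵥ v) i / v i) *ᵥ x) :=
        hQ.dotProduct_mulVec_le (by simp [Q, IsSymm, transpose_add, add_comm]) hv x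
    _ = -(x ⬝ᵥ (diagonal (fun i => -(Q *ᵥ v) i / v i) *ᵥ x)) := by
        simp [neg_div, dotProduct, mulVec_diagonal]

theorem HasDerivAt.nonpos_of_eventually_le_left {f : ℝ → ℝ} {f' x : ℝ} (hf : HasDerivAt f f' x)
    (hmin : ∀ᶠ t in 𝓝[<] x, f x ≤ f t) : f' ≤ 0 := by
  have hslope : Tendsto (slope f x) (𝓝[<] x) (𝓝 f') :=
    (hasDerivAt_iff_tendsto_slope.1 hf).mono_left (nhdsWithin_mono _ fun _ ht => ne_of_lt ht)
  refine le_of_tendsto hslope ?_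
  filter_upwards [hmin, self_mem_nhdsWithin] with t hft (ht : t < x)
  rw [slope_def_field]
  exact div_nonpos_of_nonneg_of_nonpos (sub_nonneg.2 hft) (sub_nonpos.2 ht.le)

theorem forall_pos_of_deriv_pos_at_first_zero {ι : Type*} [Finite ι] {g g' : ι → ℝ → ℝ} {T : ℝ}
    (hg : ∀ i t, HasDerivAt (g i) (g' i t) t) (h0 : ∀ i, 0 < g i 0)
    (hzero : ∀ t ∈ Ioc 0 T, ∀ i, (∀ j, 0 ≤ g j t) → g i t = 0 → 0 < g' i t) :
    ∀ t ∈ Icc 0 T, ∀ i, 0 < g i t := by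
  by_contra! hex
  have hcont : ∀ i, Continuous (g i) := fun i =>
    continuous_iff_continuousAt.2 fun t => (hg i t).continuousAt
  set B := Icc 0 T ∩ ⋃ i, {t | g i t ≤ 0}
  have hBclosed : IsClosed B :=
    isClosed_Icc.inter (isClosed_iUnion_of_finite fun i => isClosed_le (hcont i) continuous_const)
  have hBbdd : BddBelow B := ⟨0, fun t ht => ht.1.1⟩
  obtain ⟨⟨hτ0, hτT⟩, hτ⟩ : sInf B ∈ B :=
    hBclosed.csInf_mem (let ⟨t, ht, i, hi⟩ := hex; ⟨t, ht, mem_iUnion.2 ⟨i, hi⟩⟩) hBbdd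
  obtain ⟨i, hi : g i (sInf B) ≤ 0⟩ := mem_iUnion.1 hτ
  set τ := sInf B
  have hbefore : ∀ t ∈ Ico 0 τ, ∀ j, 0 < g j t := fun t ht j => by
    by_contra! h
    exact (csInf_le hBbdd ⟨⟨ht.1, ht.2.le.trans hτT⟩, mem_iUnion.2 ⟨j, h⟩⟩).not_gt ht.2
  have hτpos : 0 < τ := hτ0.lt_of_ne fun h => (h0 i).not_ge (h ▸ hi)
  have hleft : ∀ᶠ t in 𝓝[<] τ, ∀ j, 0 < g j t := by
    filter_upwards [Ioo_mem_nhdsLT hτpos] with t ht using hbefore t ⟨ht.1.le, ht.2⟩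
  have hτnonneg : ∀ j, 0 ≤ g j τ := fun j =>
    ge_of_tendsto ((hcont j).continuousAt.tendsto.mono_left nhdsWithin_le_nhds)
      (hleft.mono fun t ht => (ht j).le)
  have hgi : g i τ = 0 := le_antisymm hi (hτnonneg i)
  have hderiv : g' i τ ≤ 0 :=
    (hg i τ).nonpos_of_eventually_le_left (hleft.mono fun t ht => hgi ▸ (ht i).le)
  exact (hzero τ ⟨hτpos, hτT⟩ i hτnonneg hgi).not_ge hderiv

theorem le_mul_exp_of_hasDerivAt_le {V V' : ℝ → ℝ} {c : ℝ} (hV : ∀ t, HasDerivAt V (V' t) t)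
    (hbound : ∀ t, 0 ≤ t → V' t ≤ -c * V t) {t : ℝ} (ht : 0 ≤ t) :
    V t ≤ V 0 * Real.exp (-c * t) := by
  have := le_gronwallBound_of_liminf_deriv_right_le (f := V) (K := -c) (ε := 0) (a := 0) (b := t)
    (continuous_iff_continuousAt.2 fun s => (hV s).continuousAt).continuousOn
    (fun s _ _ hr => (hV s).hasDerivWithinAt.liminf_right_slope_le hr) le_rfl
    (fun s hs => by simpa using hbound s hs.1) t ⟨ht, le_rfl⟩
  simpa [gronwallBound_ε0] using this

theorem hasDerivAt_dotProduct_diagonal_mulVec {ι : Type*} [Fintype ι] [DecidableEq ι]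
    {p p' : ℝ → ι → ℝ} (hp : ∀ i t, HasDerivAt (fun s => p s i) (p' t i) t) (r : ι → ℝ) (t : ℝ) :
    HasDerivAt (fun s => p s ⬝ᵥ (diagonal r *ᵥ p s)) (2 * (p t ⬝ᵥ (diagonal r *ᵥ p' t))) t := by
  have := HasDerivAt.fun_sum fun i (_ : i ∈ Finset.univ) => ((hp i t).fun_pow 2).const_mul (r i)
  simp only [dotProduct, mulVec_diagonal]
  refine (this.congr_deriv ?_).congr_of_eventuallyEq (Eventually.of_forall fun s => ?_)
  · simp only [Finset.mul_sum]
    exact Finset.sum_congr rfl fun i _ => by ring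
  · exact Finset.sum_congr rfl fun i _ => by ring

theorem tendsto_zero_of_diagonal_lyapunov {ι : Type*} [Fintype ι] [DecidableEq ι]
    {p p' : ℝ → ι → ℝ} {r d : ι → ℝ} (hp : ∀ i t, HasDerivAt (fun s => p s i) (p' t i) t)
    (hr : ∀ i, 0 < r i) (hd : ∀ i, 0 < d i)
    (hV : ∀ t, 0 ≤ t → 2 * (p t ⬝ᵥ (diagonal r *ᵥ p' t)) ≤ -(p t ⬝ᵥ (diagonal d *ᵥ p t))) :
    Tendsto p atTop (𝓝 0) := by
  set V := fun t => p t ⬝ᵥ (diagonal r *ᵥ p t)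
  have hVsum : ∀ t, V t = ∑ i, r i * p t i ^ 2 := fun t => by
    simp only [V, dotProduct, mulVec_diagonal]
    exact Finset.sum_congr rfl fun i _ => by ring
  obtain ⟨c, hcd, hc : 0 < c⟩ : ∃ c, (∀ i, c * r i ≤ d i) ∧ 0 < c := by
    refine ((eventually_all.2 fun i => ?_).and self_mem_nhdsWithin).exists (f := 𝓝[>] (0 : ℝ))
    have : Tendsto (fun c : ℝ => c * r i) (𝓝[>] 0) (𝓝 0) :=
      tendsto_nhdsWithin_of_tendsto_nhds (by simpa using (continuous_mul_const (r i)).tendsto 0)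
    exact (this.eventually_lt_const (hd i)).mono fun c hc => hc.le
  have hdecay : ∀ t, 0 ≤ t → V t ≤ V 0 * Real.exp (-c * t) := fun t ht =>
    le_mul_exp_of_hasDerivAt_le (hasDerivAt_dotProduct_diagonal_mulVec hp r) (fun s hs => by
      have hcV : c * V s ≤ p s ⬝ᵥ (diagonal d *ᵥ p s) := by
        rw [hVsum, Finset.mul_sum]
        simp only [dotProduct, mulVec_diagonal]
        exact Finset.sum_le_sum fun i _ => by nlinarith [hcd i, sq_nonneg (p s i)]
      linarith [hV s hs]) ht
  refine tendsto_pi_nhds.2 fun i => ?_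
  have hexp : Tendsto (fun t => V 0 / r i * Real.exp (-c * t)) atTop (𝓝 0) := by
    simpa using (Real.tendsto_exp_neg_atTop_nhds_zero.comp
      (tendsto_id.const_mul_atTop hc)).const_mul (V 0 / r i)
  have hsq : Tendsto (fun t => p t i ^ 2) atTop (𝓝 0) := by
    refine squeeze_zero' (Eventually.of_forall fun t => sq_nonneg _) ?_ hexp
    filter_upwards [eventually_ge_atTop 0] with t ht
    have hcoord : r i * p t i ^ 2 ≤ V t := by
      rw [hVsum]
      exact Finset.single_le_sum (f := fun j => r j * p t j ^ 2)
        (fun j _ => mul_nonneg (hr j).le (sq_nonneg _)) (Finset.mem_univ i)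
    rw [div_mul_eq_mul_div, le_div_iff₀' (hr i)]
    exact hcoord.trans (hdecay t ht)
  have habs : Tendsto (fun t => |p t i|) atTop (𝓝 0) := by
    simpa [Real.sqrt_sq_eq_abs] using hsq.sqrt
  exact (tendsto_zero_iff_abs_tendsto_zero _).2 habs

section SIS

variable {ι : Type*} [Fintype ι] [DecidableEq ι]

def sisField (C : Matrix ι ι ℝ) (δ x : ι → ℝ) : ι → ℝ :=
  (C - diagonal δ) *ᵥ x - diagonal x *ᵥ (C *ᵥ x)

theorem sisField_apply (C : Matrix ι ι ℝ) (δ x : ι → ℝ) (i : ι) :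
    sisField C δ x i = (1 - x i) * (C *ᵥ x) i - δ i * x i := by
  simp only [sisField, sub_mulVec, Pi.sub_apply, mulVec_diagonal]
  ring

theorem dotProduct_diagonal_mulVec_sisField_le {C : Matrix ι ι ℝ} (hC : ∀ i j, 0 ≤ C i j)
    (δ : ι → ℝ) {r p : ι → ℝ} (hr : 0 ≤ r) (hp : 0 ≤ p) :
    p ⬝ᵥ (diagonal r *ᵥ sisField C δ p) ≤ p ⬝ᵥ (diagonal r *ᵥ ((C - diagonal δ) *ᵥ p)) := by
  rw [sisField, mulVec_sub, dotProduct_sub, sub_le_self_iff]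
  refine dotProduct_nonneg_of_nonneg hp fun i => ?_
  simp only [mulVec_diagonal]
  exact mul_nonneg (hr i) (mul_nonneg (hp i) (mulVec_nonneg hC hp i))

theorem neg_le_sisField_apply {C : Matrix ι ι ℝ} (hC : ∀ i j, 0 ≤ C i j) {δ : ι → ℝ}
    (hδ : 0 ≤ δ) {x : ι → ℝ} {E : ℝ} (hE0 : 0 ≤ E) (hE1 : E ≤ 1) (hx : ∀ j, -E ≤ x j) {i : ι}
    (hi : x i = -E) : -(2 * (∑ j, C i j) * E) ≤ sisField C δ x i := by
  have hrow : 0 ≤ ∑ j, C i j := Finset.sum_nonneg fun j _ => hC i j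
  have hCx : ∑ j, C i j * -E ≤ (C *ᵥ x) i :=
    Finset.sum_le_sum fun j _ => mul_le_mul_of_nonneg_left (hx j) (hC i j)
  rw [← Finset.sum_mul] at hCx
  rw [sisField_apply, hi]
  nlinarith [mul_le_mul_of_nonneg_left hCx (by linarith : 0 ≤ 1 + E), mul_nonneg hE0 (hδ i),
    mul_le_mul_of_nonneg_left hE1 (mul_nonneg hrow hE0)]

theorem nonneg_of_hasDerivAt_sisField {C : Matrix ι ι ℝ} (hC : ∀ i j, 0 ≤ C i j) {δ : ι → ℝ}
    (hδ : 0 ≤ δ) {p : ℝ → ι → ℝ}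
    (hp : ∀ i t, HasDerivAt (fun s => p s i) (sisField C δ (p t) i) t) (h0 : ∀ i, 0 ≤ p 0 i)
    {t : ℝ} (ht : 0 ≤ t) (i : ι) : 0 ≤ p t i := by
  set L := 2 * ∑ i, ∑ j, C i j + 1
  have hrow_nonneg : ∀ k, 0 ≤ ∑ j, C k j := fun k => Finset.sum_nonneg fun j _ => hC k j
  have hrow : ∀ i, 2 * ∑ j, C i j < L := fun i => by
    have := Finset.single_le_sum (fun k _ => hrow_nonneg k) (Finset.mem_univ i)
    linarith
  have hL : 0 < L := by
    have : 0 ≤ ∑ k, ∑ j, C k j := Finset.sum_nonneg fun k _ => hrow_nonneg k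
    linarith
  -- `p + η e^{Ls}` stays positive while the barrier `η e^{Ls}` is at most `1`; then `η → 0`
  have hmargin : ∀ η, 0 < η → η * Real.exp (L * t) ≤ 1 → -(η * Real.exp (L * t)) < p t i := by
    intro η hη hηt
    have hbarrier : ∀ s, HasDerivAt (fun s => η * Real.exp (L * s)) (η * Real.exp (L * s) * L) s :=
      fun s => by simpa [mul_assoc] using ((hasDerivAt_id s).const_mul L).exp.const_mul η
    have := forall_pos_of_deriv_pos_at_first_zero (T := t)
      (g := fun j s => p s j + η * Real.exp (L * s))
      (fun j s => (hp j s).add (hbarrier s)) (fun j => by simpa using by linarith [h0 j]) ?_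
      t ⟨ht, le_rfl⟩ i
    · linarith
    intro s hs j hnonneg hj
    have hE0 : 0 < η * Real.exp (L * s) := by positivity
    have hE1 : η * Real.exp (L * s) ≤ 1 :=
      le_trans (mul_le_mul_of_nonneg_left (Real.exp_le_exp.2
        (mul_le_mul_of_nonneg_left hs.2 hL.le)) hη.le) hηt
    have := neg_le_sisField_apply hC hδ hE0.le hE1 (fun k => by linarith [hnonneg k])
      (by linarith [hj] : p s j = _)
    nlinarith [hrow j]
  have hlim : Tendsto (fun η => -(η * Real.exp (L * t))) (𝓝[>] 0) (𝓝 0) :=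
    tendsto_nhdsWithin_of_tendsto_nhds (by
      simpa using (show Continuous fun η : ℝ => -(η * Real.exp (L * t)) by fun_prop).tendsto 0)
  refine le_of_tendsto hlim ?_
  filter_upwards [Ioo_mem_nhdsGT (Real.exp_pos (-(L * t)))] with η hη
  refine (hmargin η hη.1 ?_).le
  calc η * Real.exp (L * t) ≤ Real.exp (-(L * t)) * Real.exp (L * t) := by gcongr; exact hη.2.le
    _ = 1 := by rw [← Real.exp_add]; simp

end SIS

theorem stmt12_general {n : ℕ} (A : Matrix (Fin n) (Fin n) ℝ) (hA : ∀ i j, 0 ≤ A i j)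
    (β δ : Fin n → ℝ) (hβ : ∀ i, 0 < β i) (hδ : ∀ i, 0 < δ i)
    (hHur : IsHurwitz (Aᵀ * Matrix.diagonal β - Matrix.diagonal δ)) :
    ∃ r : Fin n → ℝ, (∀ i, 0 < r i) ∧
      ∃ K : Matrix (Fin n) (Fin n) ℝ, K.PosDef ∧
        (∀ p : Fin n → ℝ, (∀ i, p i ∈ Set.Icc (0:ℝ) 1) →
          2 * (p ⬝ᵥ (Matrix.diagonal r *ᵥ
            ((Aᵀ * Matrix.diagonal β - Matrix.diagonal δ) *ᵥ p -
              Matrix.diagonal p *ᵥ ((Aᵀ * Matrix.diagonal β) *ᵥ p))))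
            ≤ -(p ⬝ᵥ (K *ᵥ p))) ∧
        ∀ p : ℝ → Fin n → ℝ,
          (∀ i t, HasDerivAt (fun s => p s i)
            (((Aᵀ * Matrix.diagonal β - Matrix.diagonal δ) *ᵥ (p t) -
              Matrix.diagonal (p t) *ᵥ ((Aᵀ * Matrix.diagonal β) *ᵥ (p t))) i) t) →
          (∀ i, p 0 i ∈ Set.Icc (0:ℝ) 1) →
          Filter.Tendsto p Filter.atTop (nhds 0) := by
  set C := Aᵀ * diagonal β
  have hC : ∀ i j, 0 ≤ C i j := fun i j => by
    simpa [C, mul_diagonal] using mul_nonneg (hA j i) (hβ j).le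
  have hN : IsMetzler (C - diagonal δ) := fun i j hij => by
    simpa [diagonal_apply_ne _ hij] using hC i j
  obtain ⟨r, d, hr, hd, hlyap⟩ := hN.exists_diagonal_lyapunov hHur
  have hV : ∀ p : Fin n → ℝ, 0 ≤ p →
      2 * (p ⬝ᵥ (diagonal r *ᵥ sisField C δ p)) ≤ -(p ⬝ᵥ (diagonal d *ᵥ p)) := fun p hp =>
    le_trans (by gcongr; exact dotProduct_diagonal_mulVec_sisField_le hC δ (fun i => (hr i).le) hp)
      (hlyap p)
  refine ⟨r, hr, diagonal d, PosDef.diagonal hd, fun p hp => hV p fun i => (hp i).1,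
    fun p hp h0 => tendsto_zero_of_diagonal_lyapunov hp hr hd fun t ht => hV _ fun i => ?_⟩
  exact nonneg_of_hasDerivAt_sisField hC (fun i => (hδ i).le) hp (fun i => (h0 i).1) ht i

theorem stmt12 {n : ℕ} (A : Matrix (Fin n) (Fin n) ℝ) (hA : ∀ i j, 0 ≤ A i j)
    (hAdiag : ∀ i, A i i = 0)
    (β δ : Fin n → ℝ) (hβ : ∀ i, 0 < β i) (hδ : ∀ i, 0 < δ i)
    (hHur : IsHurwitz (Aᵀ * Matrix.diagonal β - Matrix.diagonal δ)) :
    ∃ r : Fin n → ℝ, (∀ i, 0 < r i) ∧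
      ∃ K : Matrix (Fin n) (Fin n) ℝ, K.PosDef ∧
        (∀ p : Fin n → ℝ, (∀ i, p i ∈ Set.Icc (0:ℝ) 1) →
          2 * (p ⬝ᵥ (Matrix.diagonal r *ᵥ
            ((Aᵀ * Matrix.diagonal β - Matrix.diagonal δ) *ᵥ p -
              Matrix.diagonal p *ᵥ ((Aᵀ * Matrix.diagonal β) *ᵥ p))))
            ≤ -(p ⬝ᵥ (K *ᵥ p))) ∧
        ∀ p : ℝ → Fin n → ℝ,
          (∀ i t, HasDerivAt (fun s => p s i)
            (((Aᵀ * Matrix.diagonal β - Matrix.diagonal δ) *ᵥ (p t) -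
              Matrix.diagonal (p t) *ᵥ ((Aᵀ * Matrix.diagonal β) *ᵥ (p t))) i) t) →
          (∀ i, p 0 i ∈ Set.Icc (0:ℝ) 1) →
          Filter.Tendsto p Filter.atTop (nhds 0) :=
  stmt12_general A hA β δ hβ hδ hHur
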